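/- Let K be a field of characteristic 2 and L a degree-4 cyclic Galois extension of K with Galois group generated by σ. Consider the K-linear maps T_{a,c}: L → L defined by T_{a,c}(z) = a·σ²(z) + (a+c)·z, where a ∈ K and c ∈ L has trace zero. Then: (i) for a ≠ 0, T_{a,0} has rank 2 and satisfies T_{a,0}² = 0 (is nilpotent); (ii) for c ≠ 0, T_{a,c} is invertible. Hence the set of these maps is a 4-dimensional subspace of End_K(L) whose elements of determinant zero form a one-dimensional subspace. -/

import Mathlib

/-!
In characteristic 2, `T_{a,0} = a (σ² + 1)` and `(σ² + 1)² = σ⁴ + 1 = 0`; its kernel is the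
fixed field of `σ²`, of degree 2. For `c ≠ 0` of trace zero and `a ≠ 0`, a kernel vector
`z ≠ 0` satisfies `σ² z = d z` with `d = (a + c) / a`, so `σ²(d) d = 1` and `d` has trace
zero. Writing that trace as `d + σ d + d⁻¹ + (σ d)⁻¹ = (d + σ d)(1 + (d σ d)⁻¹)` forces
`σ d = d`, then `d² = 1`, so `d = 1` and `c = 0`. Hence the singular members of the
4-dimensional family are exactly the multiples of `T_{1,0}`.
-/

/-- The map `T_{a,c} : z ↦ a·σ²(z) + (a+c)·z` on a quartic extension `L/K`. -/
noncomputable def T10 {K L : Type*} [Field K] [Field L] [Algebra K L]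
    (σ : L ≃ₐ[K] L) (a : K) (c : L) : L →ₗ[K] L :=
  a • (σ.toLinearMap ∘ₗ σ.toLinearMap) + LinearMap.mulLeft K (algebraMap K L a + c)

open Module IntermediateField

theorem CharTwo.eq_one_of_map_map_mul_eq_one {L : Type*} [Field L] [CharP L 2]
    (σ : L →+* L) {d : L} (hd : σ (σ d) * d = 1)
    (hsum : d + σ d + σ (σ d) + σ (σ (σ d)) = 0) : d = 1 := by
  have hd0 : d ≠ 0 := right_ne_zero_of_mul_eq_one hd
  have hσd0 : σ d ≠ 0 := (map_ne_zero σ).mpr hd0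
  have h2 : σ (σ d) = d⁻¹ := eq_inv_of_mul_eq_one_left hd
  have h3 : σ (σ (σ d)) = (σ d)⁻¹ := by rw [h2, map_inv₀]
  have hfactor : (d + σ d) * (d * σ d + 1) = 0 := by
    rw [h3, h2] at hsum
    field_simp at hsum
    linear_combination hsum
  have hfix : σ d = d := by
    rcases mul_eq_zero.mp hfactor with h | h
    · exact (CharTwo.add_eq_zero.mp h).symm
    · refine σ.injective ?_
      rw [h2]
      exact (eq_inv_of_mul_eq_one_right (CharTwo.add_eq_zero.mp h)).symm
  rw [hfix, hfix] at hd
  exact CharTwo.sq_inj.mp (by linear_combination hd)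

theorem AlgEquiv.apply_four_of_pow_four_eq_one {K L : Type*} [Field K] [Field L] [Algebra K L]
    {σ : L ≃ₐ[K] L} (hσ : σ ^ 4 = 1) (z : L) : σ (σ (σ (σ z))) = z := by
  simpa [pow_succ] using DFunLike.congr_fun hσ z

theorem map_map_mul_eq_one_of_map_map_eq_mul {K L : Type*} [Field K] [Field L] [Algebra K L]
    {σ : L ≃ₐ[K] L} (hσ : σ ^ 4 = 1) {z d : L} (hz : z ≠ 0) (h : σ (σ z) = d * z) :
    σ (σ d) * d = 1 := by
  have : (σ (σ d) * d) * z = 1 * z := by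
    calc (σ (σ d) * d) * z = σ (σ d) * σ (σ z) := by rw [h, mul_assoc]
    _ = σ (σ (σ (σ z))) := by rw [h, map_mul, map_mul, h]
    _ = 1 * z := by rw [AlgEquiv.apply_four_of_pow_four_eq_one hσ, one_mul]
  exact mul_right_cancel₀ hz this

section Galois

variable {K L : Type*} [Field K] [Field L] [Algebra K L]

theorem IntermediateField.mem_fixedField_zpowers_iff (τ : L ≃ₐ[K] L) (x : L) :
    x ∈ fixedField (Subgroup.zpowers τ) ↔ τ x = x := by
  rw [mem_fixedField_iff]
  refine ⟨fun h => h τ (Subgroup.mem_zpowers τ), fun h f hf => ?_⟩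
  have hτ : τ ∈ MulAction.stabilizer (L ≃ₐ[K] L) x := h
  exact Subgroup.zpowers_le.mpr hτ hf

theorem IntermediateField.finrank_fixedField_zpowers_mul_orderOf [FiniteDimensional K L]
    (τ : L ≃ₐ[K] L) :
    finrank K (fixedField (Subgroup.zpowers τ)) * orderOf τ = finrank K L := by
  rw [← Nat.card_zpowers, ← finrank_fixedField_eq_card, finrank_mul_finrank]

theorem orderOf_eq_finrank_of_forall_mem_zpowers [FiniteDimensional K L] [IsGalois K L]
    {σ : L ≃ₐ[K] L} (hgen : ∀ τ : L ≃ₐ[K] L, τ ∈ Subgroup.zpowers σ) :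
    orderOf σ = finrank K L := by
  rw [orderOf_eq_card_of_forall_mem_zpowers hgen, IsGalois.card_aut_eq_finrank]

theorem algebraMap_trace_eq_sum_range_orderOf [FiniteDimensional K L] [IsGalois K L]
    {σ : L ≃ₐ[K] L} (hgen : ∀ τ : L ≃ₐ[K] L, τ ∈ Subgroup.zpowers σ) (x : L) :
    algebraMap K L (Algebra.trace K L x) = ∑ i ∈ Finset.range (orderOf σ), (σ ^ i) x := by
  classical
  rw [trace_eq_sum_automorphisms, ← IsCyclic.image_range_orderOf hgen,
    Finset.sum_image fun i hi j hj h => pow_injOn_Iio_orderOf (by simpa using hi)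
      (by simpa using hj) h]

theorem finrank_ker_trace_add_one [FiniteDimensional K L] [Algebra.IsSeparable K L] :
    finrank K (LinearMap.ker (Algebra.trace K L)) + 1 = finrank K L := by
  refine Module.Dual.finrank_ker_add_one_of_ne_zero fun h => ?_
  obtain ⟨x, hx⟩ := Algebra.trace_surjective K L 1
  simp [h] at hx

end Galois

section T10

variable {K L : Type*} [Field K] [Field L] [Algebra K L] (σ : L ≃ₐ[K] L)

theorem T10_apply (a : K) (c : L) (z : L) :
    T10 σ a c z = a • σ (σ z) + (algebraMap K L a + c) * z := rfl

noncomputable def T10Hom : K × L →ₗ[K] L →ₗ[K] L where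
  toFun p := T10 σ p.1 p.2
  map_add' p q := by
    ext z
    simp only [LinearMap.add_apply, T10_apply, map_add, Algebra.smul_def, Prod.fst_add,
      Prod.snd_add]
    ring
  map_smul' k p := by
    ext z
    rw [RingHom.id_apply, LinearMap.smul_apply, T10_apply, T10_apply, Prod.smul_fst,
      Prod.smul_snd]
    simp only [Algebra.smul_def, Algebra.algebraMap_self, RingHom.id_apply, map_mul]
    ring

theorem T10Hom_apply (a : K) (c : L) : T10Hom σ (a, c) = T10 σ a c := rfl

theorem smul_T10_one_zero (a : K) : a • T10 σ 1 0 = T10 σ a 0 := by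
  rw [← T10Hom_apply, ← T10Hom_apply, ← map_smul, Prod.smul_mk, smul_eq_mul, mul_one,
    smul_zero]

theorem T10_zero_apply (a : K) (z : L) : T10 σ a 0 z = a • (σ (σ z) + z) := by
  rw [T10_apply, add_zero, smul_add, Algebra.smul_def a z]

noncomputable def T10Span (W : Submodule K L) : Submodule K (L →ₗ[K] L) :=
  LinearMap.range (T10Hom σ ∘ₗ LinearMap.prodMap LinearMap.id W.subtype)

theorem mem_T10Span_iff (W : Submodule K L) (T : L →ₗ[K] L) :
    T ∈ T10Span σ W ↔ ∃ a : K, ∃ c ∈ W, T = T10 σ a c := by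
  constructor
  · rintro ⟨⟨a, c⟩, rfl⟩
    exact ⟨a, c, c.2, rfl⟩
  · rintro ⟨a, c, hc, rfl⟩
    exact ⟨(a, ⟨c, hc⟩), rfl⟩

variable [CharP L 2]

theorem T10_apply_one (a : K) (c : L) : T10 σ a c 1 = c := by
  rw [T10_apply, map_one, map_one, Algebra.smul_def, mul_one, mul_one, ← add_assoc,
    CharTwo.add_self_eq_zero, zero_add]

theorem T10_zero_comp_self (hσ : σ ^ 4 = 1) (a : K) : T10 σ a 0 ∘ₗ T10 σ a 0 = 0 := by
  ext z
  simp only [LinearMap.comp_apply, T10_zero_apply, LinearMap.zero_apply, map_add, map_smul,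
    AlgEquiv.apply_four_of_pow_four_eq_one hσ, smul_add, ← add_assoc]
  rw [add_assoc (a • a • z), CharTwo.add_self_eq_zero, add_zero, CharTwo.add_self_eq_zero]

theorem T10Hom_injective (hσ : σ ^ 2 ≠ 1) : Function.Injective (T10Hom σ) := by
  rw [← LinearMap.ker_eq_bot, Submodule.eq_bot_iff]
  rintro ⟨a, c⟩ h
  rw [LinearMap.mem_ker, T10Hom_apply] at h
  obtain rfl : c = 0 := by rw [← T10_apply_one σ a c, h, LinearMap.zero_apply]
  obtain ⟨z, hz⟩ : ∃ z, σ (σ z) ≠ z := by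
    by_contra! h2
    exact hσ (AlgEquiv.ext fun z => by simpa [pow_two] using h2 z)
  have : a • (σ (σ z) + z) = 0 := by rw [← T10_zero_apply, h, LinearMap.zero_apply]
  rw [smul_eq_zero, CharTwo.add_eq_zero] at this
  simp [this.resolve_right hz]

theorem T10_one_zero_ne_zero (hσ : σ ^ 2 ≠ 1) : T10 σ 1 0 ≠ 0 :=
  (map_ne_zero_iff (T10Hom σ) (T10Hom_injective σ hσ) (x := (1, 0))).mpr (by simp)

theorem finrank_T10Span [FiniteDimensional K L] (hσ : σ ^ 2 ≠ 1) (W : Submodule K L) :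
    finrank K (T10Span σ W) = finrank K W + 1 := by
  rw [T10Span, LinearMap.finrank_range_of_inj, finrank_prod, finrank_self, add_comm]
  rw [LinearMap.coe_comp, LinearMap.coe_prodMap]
  exact (T10Hom_injective σ hσ).comp (Function.injective_id.prodMap W.injective_subtype)

theorem T10_injective (hσ : σ ^ 4 = 1) {a : K} {c : L}
    (hc : c + σ c + σ (σ c) + σ (σ (σ c)) = 0) (hc0 : c ≠ 0) :
    Function.Injective (T10 σ a c) := by
  rw [← LinearMap.ker_eq_bot, Submodule.eq_bot_iff]
  intro z hz
  by_contra hz0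
  rw [LinearMap.mem_ker, T10_apply, Algebra.smul_def] at hz
  rcases eq_or_ne a 0 with rfl | ha
  · simp only [map_zero, zero_add, zero_mul, mul_eq_zero] at hz
    tauto
  set A := algebraMap K L a
  have hA : A ≠ 0 := (map_ne_zero _).mpr ha
  have hσA : σ A = A := σ.commutes a
  set d := (A + c) / A
  have hd : σ (σ z) = d * z := by
    rw [div_mul_eq_mul_div, eq_div_iff hA]
    linear_combination hz - CharTwo.add_self_eq_zero ((A + c) * z)
  -- the trace of `d` is `4 + tr(c) / a`, and `4 = 0`
  have hsum : d + σ d + σ (σ d) + σ (σ (σ d)) = 0 := by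
    simp only [d, map_div₀, map_add, hσA]
    field_simp
    linear_combination hc + (CharTwo.add_self_eq_zero (A + A))
  have hd1 := CharTwo.eq_one_of_map_map_mul_eq_one σ.toRingHom
    (map_map_mul_eq_one_of_map_map_eq_mul hσ hz0 hd) hsum
  rw [div_eq_one_iff_eq hA, add_eq_left] at hd1
  exact hc0 hd1

theorem T10_bijective [FiniteDimensional K L] (hσ : σ ^ 4 = 1) {a : K} {c : L}
    (hc : c + σ c + σ (σ c) + σ (σ (σ c)) = 0) (hc0 : c ≠ 0) :
    Function.Bijective (T10 σ a c) :=
  have hinj := T10_injective σ hσ hc hc0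
  ⟨hinj, LinearMap.injective_iff_surjective.mp hinj⟩

theorem ker_T10_zero {a : K} (ha : a ≠ 0) :
    LinearMap.ker (T10 σ a 0) =
      Subalgebra.toSubmodule (fixedField (Subgroup.zpowers (σ ^ 2))).toSubalgebra := by
  ext z
  rw [LinearMap.mem_ker, T10_zero_apply, smul_eq_zero, or_iff_right ha, CharTwo.add_eq_zero,
    Subalgebra.mem_toSubmodule, mem_toSubalgebra, mem_fixedField_zpowers_iff, pow_two,
    AlgEquiv.mul_apply]

theorem two_mul_finrank_range_T10_zero [FiniteDimensional K L] (hord : orderOf σ = 4) {a : K}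
    (ha : a ≠ 0) : 2 * finrank K (LinearMap.range (T10 σ a 0)) = finrank K L := by
  have hker := finrank_fixedField_zpowers_mul_orderOf (σ ^ 2)
  rw [orderOf_pow' σ two_ne_zero, hord] at hker
  have hrank := LinearMap.finrank_range_add_finrank_ker (T10 σ a 0)
  rw [ker_T10_zero σ ha, Subalgebra.finrank_toSubmodule,
    finrank_eq_finrank_subalgebra] at hrank
  norm_num at hker
  omega

theorem det_T10_eq_zero_iff [FiniteDimensional K L] (hσ : σ ^ 4 = 1) {a : K} {c : L}
    (hc : c + σ c + σ (σ c) + σ (σ (σ c)) = 0) :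
    LinearMap.det (T10 σ a c) = 0 ↔ c = 0 := by
  rw [LinearMap.det_eq_zero_iff_ker_ne_bot, Ne, LinearMap.ker_eq_bot]
  refine ⟨fun h => by_contra fun hc0 => h (T10_injective σ hσ hc hc0), ?_⟩
  rintro rfl hinj
  exact one_ne_zero (hinj (by rw [T10_apply_one, map_zero]))

theorem mem_span_T10_one_zero_iff [FiniteDimensional K L] (hσ : σ ^ 4 = 1) (T : L →ₗ[K] L) :
    T ∈ K ∙ T10 σ 1 0 ↔
      (∃ a : K, ∃ c : L, c + σ c + σ (σ c) + σ (σ (σ c)) = 0 ∧ T = T10 σ a c) ∧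
        LinearMap.det T = 0 := by
  rw [Submodule.mem_span_singleton]
  constructor
  · rintro ⟨a, rfl⟩
    have h0 : (0 : L) + σ 0 + σ (σ 0) + σ (σ (σ 0)) = 0 := by simp
    rw [smul_T10_one_zero]
    exact ⟨⟨a, 0, h0, rfl⟩, (det_T10_eq_zero_iff σ hσ h0).mpr rfl⟩
  · rintro ⟨⟨a, c, hc, rfl⟩, hdet⟩
    obtain rfl := (det_T10_eq_zero_iff σ hσ hc).mp hdet
    exact ⟨a, smul_T10_one_zero σ a⟩

end T10

theorem stmt10 {K L : Type*} [Field K] [Field L] [CharP K 2] [Algebra K L]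
    [IsGalois K L] (hdim : Module.finrank K L = 4) (σ : L ≃ₐ[K] L)
    (hgen : ∀ τ : L ≃ₐ[K] L, τ ∈ Subgroup.zpowers σ) :
    (∀ a : K, a ≠ 0 →
      Module.finrank K (LinearMap.range (T10 σ a 0)) = 2 ∧
      T10 σ a 0 ∘ₗ T10 σ a 0 = 0) ∧
    (∀ (a : K) (c : L), c + σ c + σ (σ c) + σ (σ (σ c)) = 0 → c ≠ 0 →
      Function.Bijective (T10 σ a c)) ∧
    ∃ N : Submodule K (L →ₗ[K] L),
      (↑N = {T : L →ₗ[K] L | ∃ a : K, ∃ c : L,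
        c + σ c + σ (σ c) + σ (σ (σ c)) = 0 ∧ T = T10 σ a c}) ∧
      Module.finrank K N = 4 ∧
      ∃ Z : Submodule K (L →ₗ[K] L),
        (↑Z = {T : L →ₗ[K] L | (∃ a : K, ∃ c : L,
          c + σ c + σ (σ c) + σ (σ (σ c)) = 0 ∧ T = T10 σ a c) ∧
          LinearMap.det T = 0}) ∧
        Module.finrank K Z = 1 := by
  have : FiniteDimensional K L := Module.finite_of_finrank_eq_succ hdim
  have : CharP L 2 := charP_of_injective_algebraMap (algebraMap K L).injective 2
  have hord : orderOf σ = 4 := (orderOf_eq_finrank_of_forall_mem_zpowers hgen).trans hdim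
  have hσ4 : σ ^ 4 = 1 := hord ▸ pow_orderOf_eq_one σ
  have hσ2 : σ ^ 2 ≠ 1 := pow_ne_one_of_lt_orderOf two_ne_zero (by omega)
  have htrace (c : L) :
      c + σ c + σ (σ c) + σ (σ (σ c)) = 0 ↔ c ∈ LinearMap.ker (Algebra.trace K L) := by
    rw [LinearMap.mem_ker, ← (algebraMap K L).injective.eq_iff, map_zero,
      algebraMap_trace_eq_sum_range_orderOf hgen, hord]
    simp [Finset.sum_range_succ]
  refine ⟨fun a ha => ⟨?_, T10_zero_comp_self σ hσ4 a⟩,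
    fun a c hc hc0 => T10_bijective σ hσ4 hc hc0, ?_⟩
  · have := two_mul_finrank_range_T10_zero σ hord ha
    omega
  let W := LinearMap.ker (Algebra.trace K L)
  have hW : finrank K W + 1 = 4 := hdim ▸ finrank_ker_trace_add_one
  refine ⟨T10Span σ W, ?_, by rw [finrank_T10Span σ hσ2, hW], K ∙ T10 σ 1 0, ?_,
    finrank_span_singleton (T10_one_zero_ne_zero σ hσ2)⟩
  · ext T
    simp only [SetLike.mem_coe, mem_T10Span_iff, htrace]
    rfl
  · ext T
    exact mem_span_T10_one_zero_iff σ hσ4 T
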